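/- arXiv:2008.12373 — 2 statements merged into one kernel-verified Lean document; each statement's English description precedes it below -/
import Mathlib

section
/- Let M be a counting measure with N·a atoms all lying in a set S (where a > 0 is such that N·a ∈ ℕ), rescaled so that M(S) = a, and let k ≥ 1. Then the difference between sampling with replacement and sampling without replacement of k points, evaluated on the indicator of S^k, satisfies ⟨M^{⊗k} − M^{⊗↓k}, 1_{S^k}⟩ = a^k · (1 − ∏_{j=0}^{k−1}(1 − j/(N·a))), where in the without-replacement measure each sampled atom subtracts mass 1/N. In particular this quantity is nonnegative and bounded above by a^{k−1}·k(k−1)/(2N). -/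
/-!
Both samplers can be evaluated exactly on the atomic measure `M = N⁻¹ • ∑ δ_{pᵢ}`. Conditioning on
the first point, sampling with replacement contributes a factor `n / N = a` at every step, while
without replacement the `j`-th point is drawn from the `n - j` remaining atoms, each of mass `1/N`;
hence the two values are `a ^ k` and `∏ j < k, (n - j) / N = a ^ k ∏ j < k, (1 - j / (N a))`.
Because `M` is carried by the finitely many atoms, the value on the possibly non-measurable set
`S ^ k` is the common value on all measurable supersets of `(range pts) ^ k`. The bound follows
from `1 - ∏ (1 - xⱼ) ≤ ∑ xⱼ` and `∑ j < k, j = k (k - 1) / 2`.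
-/

open MeasureTheory
open scoped ENNReal NNReal

/-- Sampling with replacement of `k` points from `M`: the `k`-fold product `M^{⊗k}`. -/
noncomputable def sampWR {P : Type*} [MeasurableSpace P] :
    (k : ℕ) → Measure P → Measure (Fin k → P)
  | 0, _ => Measure.dirac (fun i => i.elim0)
  | (k + 1), M => M.bind (fun p => (sampWR k M).map (fun v => Fin.cons p v))

/-- Sampling without replacement of `k` points from the rescaled measure `M`, where each
sampled atom subtracts mass `1/N`:
`M^{⊗↓k}(dp₁,…,dp_k) = M(dp₁)(M−(1/N)δ_{p₁})(dp₂)⋯(M−(1/N)δ_{p₁}−⋯−(1/N)δ_{p_{k−1}})(dp_k)`. -/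
noncomputable def sampWON {P : Type*} [MeasurableSpace P] (N : ℕ) :
    (k : ℕ) → Measure P → Measure (Fin k → P)
  | 0, _ => Measure.dirac (fun i => i.elim0)
  | (k + 1), M =>
      M.bind (fun p =>
        (sampWON N k (M - (N : ℝ≥0∞)⁻¹ • Measure.dirac p)).map (fun v => Fin.cons p v))

theorem measurable_fin_cons {P : Type*} [MeasurableSpace P] {k : ℕ} (p : P) :
    Measurable fun v : Fin k → P => (Fin.cons p v : Fin (k + 1) → P) :=
  measurable_pi_iff.2 <| Fin.cases (by simp) fun j => by simpa using measurable_pi_apply j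

theorem preimage_fin_cons_univ_pi_const {P : Type*} {k : ℕ} {s : Set P} {p : P} (hp : p ∈ s) :
    (fun v : Fin k → P => (Fin.cons p v : Fin (k + 1) → P)) ⁻¹' Set.univ.pi (fun _ => s) =
      Set.univ.pi (fun _ => s) := by
  ext v
  simp [Fin.forall_iff_succ, hp]

theorem measure_eq_of_forall_measurableSet_superset {α : Type*} [MeasurableSpace α]
    {μ : Measure α} {s t : Set α} {c : ℝ≥0∞} (hs : MeasurableSet s)
    (h : ∀ W, MeasurableSet W → s ⊆ W → μ W = c) (hst : s ⊆ t) : μ t = c :=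
  le_antisymm ((measure_mono (Set.subset_univ t)).trans_eq (h _ .univ (Set.subset_univ s)))
    ((h s hs subset_rfl).symm.trans_le (measure_mono hst))

namespace MeasureTheory.Measure

variable {P Q : Type*} [MeasurableSpace P] [MeasurableSpace Q]

theorem smul_finsetSum_dirac_sub_dirac {ι : Type*} [DecidableEq ι] {c : ℝ≥0∞} (hc : c ≠ ∞)
    (x : ι → P) {t : Finset ι} {i : ι} (hi : i ∈ t) :
    c • ∑ j ∈ t, dirac (x j) - c • dirac (x i) = c • ∑ j ∈ t.erase i, dirac (x j) := by
  have := (dirac (x i)).smul_finite hc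
  rw [← Finset.add_sum_erase t _ hi, smul_add, add_comm, Measure.add_sub_cancel]

theorem bind_smul_finsetSum_dirac [MeasurableSingletonClass P] {ι : Type*} (c : ℝ≥0∞)
    (x : ι → P) (t : Finset ι) (g : P → Measure Q) :
    (c • ∑ i ∈ t, dirac (x i)).bind g = c • ∑ i ∈ t, g (x i) := by
  have hg : AEMeasurable g (∑ i ∈ t, dirac (x i)) :=
    Finset.sum_induction _ (fun μ => AEMeasurable g μ) (fun _ _ => AEMeasurable.add_measure)
      (by simp) fun _ _ => aemeasurable_dirac
  ext s hs
  rw [bind_apply hs (hg.smul_measure c), lintegral_smul_measure, lintegral_finsetSum_measure,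
    Measure.smul_apply, finsetSum_apply]
  simp only [lintegral_dirac, smul_eq_mul]

end MeasureTheory.Measure

namespace ENNReal

theorem one_sub_mul_le (a b : ℝ≥0∞) : 1 - a * b ≤ (1 - a) + (1 - b) := by
  rcases le_total a 1 with ha | ha
  · calc 1 - a * b ≤ (1 - a) + (a - a * b) := tsub_le_tsub_add_tsub
      _ = (1 - a) + a * (1 - b) := by
        rw [ENNReal.mul_sub fun _ _ => (ha.trans_lt one_lt_top).ne, mul_one]
      _ ≤ (1 - a) + (1 - b) := add_le_add_right (mul_le_of_le_one_left' ha) _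
  · exact (tsub_le_tsub_left (le_mul_of_one_le_left' ha) 1).trans le_add_self

theorem one_sub_prod_le_sum {ι : Type*} (s : Finset ι) (f : ι → ℝ≥0∞) :
    1 - ∏ i ∈ s, f i ≤ ∑ i ∈ s, (1 - f i) :=
  s.apply_prod_le_sum_apply (fun x => 1 - x) (by simp) one_sub_mul_le

theorem sub_div_eq_div_mul_one_sub {x y z : ℝ≥0∞} (hx : x ≠ ∞) (hz : z ≠ 0) :
    (x - y) / z = x / z * (1 - y / x) := by
  rcases eq_or_ne x 0 with rfl | hx₀
  · simp
  have hcancel : x / z * (y / x) = y / z := by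
    simp only [div_eq_mul_inv]
    calc x * z⁻¹ * (y * x⁻¹) = y * z⁻¹ * (x * x⁻¹) := by ring
      _ = y * z⁻¹ := by rw [ENNReal.mul_inv_cancel hx₀ hx, mul_one]
  rw [ENNReal.mul_sub fun _ _ => ENNReal.div_ne_top hx hz, mul_one, hcancel,
    ENNReal.sub_div fun _ _ => hz]

theorem sum_range_natCast_mul_two (k : ℕ) :
    (∑ j ∈ Finset.range k, (j : ℝ≥0∞)) * 2 = k * (k - 1) := by
  have h := congrArg ((↑) : ℕ → ℝ≥0∞) (Finset.sum_range_id_mul_two k)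
  push_cast [ENNReal.natCast_sub] at h
  exact h

theorem one_sub_prod_range_one_sub_div_le (k : ℕ) (x : ℝ≥0∞) :
    1 - ∏ j ∈ Finset.range k, (1 - j / x) ≤ (∑ j ∈ Finset.range k, (j : ℝ≥0∞)) / x :=
  calc 1 - ∏ j ∈ Finset.range k, (1 - j / x) ≤ ∑ j ∈ Finset.range k, (1 - (1 - j / x)) :=
        one_sub_prod_le_sum _ _
    _ ≤ ∑ j ∈ Finset.range k, (j : ℝ≥0∞) / x := Finset.sum_le_sum fun _ _ => tsub_tsub_le
    _ = (∑ j ∈ Finset.range k, (j : ℝ≥0∞)) / x := by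
        simp only [div_eq_mul_inv, Finset.sum_mul]

theorem pow_mul_one_sub_prod_le {a : ℝ≥0∞} (ha : a ≠ ∞) (N k : ℕ) :
    a ^ k * (1 - ∏ j ∈ Finset.range k, (1 - j / (N * a))) ≤
      a ^ (k - 1) * (k * (k - 1)) / (2 * N) := by
  rcases k with _ | k
  · simp
  rcases eq_or_ne a 0 with rfl | ha₀
  · simp
  set G := ∑ j ∈ Finset.range (k + 1), (j : ℝ≥0∞)
  calc a ^ (k + 1) * (1 - ∏ j ∈ Finset.range (k + 1), (1 - j / (N * a)))
        ≤ a ^ (k + 1) * (G / (N * a)) := by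
        gcongr; exact one_sub_prod_range_one_sub_div_le _ _
    _ = a ^ k * G * a / (N * a) := by rw [← mul_div_assoc, pow_succ, mul_right_comm]
    _ = a ^ k * (G * 2) / (N * 2) := by
        rw [ENNReal.mul_div_mul_right _ _ ha₀ ha, ← mul_assoc,
          ENNReal.mul_div_mul_right _ _ two_ne_zero ofNat_ne_top]
    _ = a ^ (k + 1 - 1) * ((k + 1 : ℕ) * ((k + 1 : ℕ) - 1)) / (2 * N) := by
        rw [sum_range_natCast_mul_two, Nat.add_sub_cancel, mul_comm (N : ℝ≥0∞)]

end ENNReal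

open Set Finset Measure

section Sampling

variable {P ι : Type*} [MeasurableSpace P] [MeasurableSingletonClass P]

theorem sampWR_smul_finsetSum_dirac_apply (c : ℝ≥0∞) (x : ι → P) (t : Finset ι) (k : ℕ)
    {W : Set (Fin k → P)} (hW : MeasurableSet W) (hxW : univ.pi (fun _ => range x) ⊆ W) :
    sampWR k (c • ∑ i ∈ t, dirac (x i)) W = (c * #t) ^ k := by
  induction k with
  | zero =>
    rw [sampWR, pow_zero]
    exact dirac_apply_of_mem (hxW (by simp))
  | succ k ih =>
    have hcons (i : ι) : map (Fin.cons (x i)) (sampWR k (c • ∑ i ∈ t, dirac (x i))) W =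
        (c * #t) ^ k := by
      rw [map_apply (measurable_fin_cons _) hW]
      refine ih (measurable_fin_cons _ hW) ?_
      rw [← preimage_fin_cons_univ_pi_const (mem_range_self i)]
      exact preimage_mono hxW
    rw [sampWR, bind_smul_finsetSum_dirac, Measure.smul_apply, finsetSum_apply]
    simp only [hcons, Finset.sum_const, nsmul_eq_mul, smul_eq_mul]
    ring

theorem sampWON_inv_smul_finsetSum_dirac_apply [DecidableEq ι] {N : ℕ} (hN : N ≠ 0)
    (x : ι → P) (t : Finset ι) (k : ℕ) {W : Set (Fin k → P)} (hW : MeasurableSet W)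
    (hxW : univ.pi (fun _ => range x) ⊆ W) :
    sampWON N k ((N : ℝ≥0∞)⁻¹ • ∑ i ∈ t, dirac (x i)) W =
      ∏ j ∈ range k, ((#t - j : ℝ≥0∞) / N) := by
  induction k generalizing t with
  | zero =>
    rw [sampWON, prod_range_zero]
    exact dirac_apply_of_mem (hxW (by simp))
  | succ k ih =>
    have hcons (i : ι) (hi : i ∈ t) : map (Fin.cons (x i))
        (sampWON N k ((N : ℝ≥0∞)⁻¹ • ∑ i ∈ t, dirac (x i) - (N : ℝ≥0∞)⁻¹ • dirac (x i))) W =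
        ∏ j ∈ range k, ((#t - (j + 1 : ℕ) : ℝ≥0∞) / N) := by
      rw [map_apply (measurable_fin_cons _) hW,
        smul_finsetSum_dirac_sub_dirac (ENNReal.inv_ne_top.2 (by exact_mod_cast hN)) x hi]
      rw [ih _ (measurable_fin_cons _ hW)]
      · simp only [card_erase_of_mem hi, ENNReal.natCast_sub, Nat.cast_one, Nat.cast_add,
          tsub_add_eq_tsub_tsub_swap]
      rw [← preimage_fin_cons_univ_pi_const (mem_range_self i)]
      exact preimage_mono hxW
    rw [sampWON, bind_smul_finsetSum_dirac, Measure.smul_apply, finsetSum_apply,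
      sum_congr rfl hcons, prod_range_succ', Finset.sum_const, nsmul_eq_mul, smul_eq_mul]
    simp only [Nat.cast_zero, tsub_zero, div_eq_mul_inv]
    ring

end Sampling

theorem sampling_with_minus_without_replacement_general
    {P : Type*} [MeasurableSpace P] [MeasurableSingletonClass P]
    (N n k : ℕ) (hN : 1 ≤ N)
    (S : Set P) (pts : Fin n → P) (hpts : ∀ i, pts i ∈ S)
    (M : Measure P) (hM : M = (N : ℝ≥0∞)⁻¹ • ∑ i, Measure.dirac (pts i))
    (a : ℝ≥0∞) (ha : a = (n : ℝ≥0∞) / N) :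
    sampWON N k M {v : Fin k → P | ∀ i, v i ∈ S} ≤
        sampWR k M {v : Fin k → P | ∀ i, v i ∈ S} ∧
    sampWR k M {v : Fin k → P | ∀ i, v i ∈ S} =
        sampWON N k M {v : Fin k → P | ∀ i, v i ∈ S} +
          a ^ k * (1 - ∏ j ∈ Finset.range k, (1 - (j : ℝ≥0∞) / ((N : ℝ≥0∞) * a))) ∧
    sampWR k M {v : Fin k → P | ∀ i, v i ∈ S} -
        sampWON N k M {v : Fin k → P | ∀ i, v i ∈ S} ≤
          a ^ (k - 1) * ((k : ℝ≥0∞) * ((k : ℝ≥0∞) - 1)) / (2 * N) := by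
  have hN₀ : (N : ℝ≥0∞) ≠ 0 := by exact_mod_cast (by omega : N ≠ 0)
  have hNa : (N : ℝ≥0∞) * a = n := by
    rw [ha]; exact ENNReal.mul_div_cancel hN₀ (ENNReal.natCast_ne_top N)
  have hT : MeasurableSet (univ.pi fun _ : Fin k => range pts) :=
    .univ_pi fun _ => (finite_range pts).measurableSet
  have hTS : (univ.pi fun _ : Fin k => range pts) ⊆ {v | ∀ i, v i ∈ S} :=
    fun v hv i => range_subset_iff.2 hpts (hv i trivial)
  set Q := ∏ j ∈ range k, (1 - (j : ℝ≥0∞) / (N * a)) with hQ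
  have hWR : sampWR k M {v | ∀ i, v i ∈ S} = a ^ k := by
    rw [hM, measure_eq_of_forall_measurableSet_superset hT
      (fun _ hW hTW => sampWR_smul_finsetSum_dirac_apply _ pts univ k hW hTW) hTS,
      card_univ, Fintype.card_fin, ha, ENNReal.div_eq_inv_mul]
  have hWON : sampWON N k M {v | ∀ i, v i ∈ S} = a ^ k * Q := by
    rw [hM, measure_eq_of_forall_measurableSet_superset hT
      (fun _ hW hTW => sampWON_inv_smul_finsetSum_dirac_apply (by omega) pts univ k hW hTW) hTS,
      card_univ, Fintype.card_fin]
    simp_rw [ENNReal.sub_div_eq_div_mul_one_sub (ENNReal.natCast_ne_top n) hN₀, ← ha]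
    rw [prod_mul_distrib, prod_const, card_range, hQ, hNa]
  have hsplit : sampWR k M {v | ∀ i, v i ∈ S} =
      sampWON N k M {v | ∀ i, v i ∈ S} + a ^ k * (1 - Q) := by
    rw [hWR, hWON, ← mul_add, add_tsub_cancel_of_le (prod_le_one' fun _ _ => tsub_le_self),
      mul_one]
  refine ⟨hsplit ▸ le_self_add, hsplit, ?_⟩
  rw [hsplit]
  exact add_tsub_le_left.trans <|
    ENNReal.pow_mul_one_sub_prod_le (ha ▸ ENNReal.div_ne_top (ENNReal.natCast_ne_top n) hN₀) N k

/-- For `M = (1/N)·Σ_{i=1}^{Na} δ_{p_i}` with all atoms in `S` (so `⟨M,1_S⟩ = a = n/N`)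
and `k ≥ 1`, the difference between sampling with replacement and without replacement,
evaluated on `1_{S^k}`, equals `a^k (1 − ∏_{j=0}^{k−1}(1 − j/(Na)))`; it is nonnegative
and bounded above by `a^{k−1} k(k−1)/(2N)`. -/
theorem sampling_with_minus_without_replacement
    {P : Type*} [MeasurableSpace P] [MeasurableSingletonClass P]
    (N n k : ℕ) (hN : 1 ≤ N) (hn : 1 ≤ n) (hk : 1 ≤ k)
    (S : Set P) (pts : Fin n → P) (hpts : ∀ i, pts i ∈ S)
    (M : Measure P) (hM : M = (N : ℝ≥0∞)⁻¹ • ∑ i, Measure.dirac (pts i))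
    (a : ℝ≥0∞) (ha : a = (n : ℝ≥0∞) / N) :
    sampWON N k M {v : Fin k → P | ∀ i, v i ∈ S} ≤
        sampWR k M {v : Fin k → P | ∀ i, v i ∈ S} ∧
    sampWR k M {v : Fin k → P | ∀ i, v i ∈ S} =
        sampWON N k M {v : Fin k → P | ∀ i, v i ∈ S} +
          a ^ k * (1 - ∏ j ∈ Finset.range k, (1 - (j : ℝ≥0∞) / ((N : ℝ≥0∞) * a))) ∧
    sampWR k M {v : Fin k → P | ∀ i, v i ∈ S} -
        sampWON N k M {v : Fin k → P | ∀ i, v i ∈ S} ≤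
          a ^ (k - 1) * ((k : ℝ≥0∞) * ((k : ℝ≥0∞) - 1)) / (2 * N) :=
  sampling_with_minus_without_replacement_general N n k hN S pts hpts M hM a ha
end

section
/- Lipschitz estimate combining reaction factor and sampling: let h : E × ℝ₊ → ℝ₊ be Lipschitz in its second argument with constant L uniform in the first, with S := ∫_E sup_{a≥0} h(ȳ,a) ϱ(dȳ) < ∞, and let Ψ : E × P → ℝ₊ be bounded by ‖Ψ‖_∞. Let ψ₁,…,ψ_k : E × P → [0,1]. Then for any finite nonnegative measures m', m'' on P with total masses at most m*, |∫_E ϱ(dȳ) [ h(ȳ,⟨m',Ψ(ȳ,·)⟩)∏_{i=1}^k ⟨m',ψ_i(ȳ,·)⟩ − h(ȳ,⟨m'',Ψ(ȳ,·)⟩)∏_{i=1}^k ⟨m'',ψ_i(ȳ,·)⟩ ]| ≤ [ L‖Ψ‖_∞ ϱ(E) (2m*) + S k ] (2m*)^{k−1} · sup_{‖ψ‖_∞≤1}|⟨m'−m'',ψ⟩|. -/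
/-!
Fix `ȳ` and write `h(a')A' - h(a'')A'' = (h(a') - h(a''))A' + h(a'')(A' - A'')`, where
`a = ⟨m, Ψ(ȳ,·)⟩` and `A = ∏ᵢ ⟨m, ψᵢ(ȳ,·)⟩`. The first term is at most `L ‖Ψ‖_∞ d (2m*)ᵏ`, with
`d` the supremum on the right-hand side, and the second at most `sup h · k (2m*)^(k-1) d` by the
telescoping bound `|∏ aᵢ - ∏ bᵢ| ≤ (∑ |aᵢ - bᵢ|) M^(k-1)` for `|aᵢ|, |bᵢ| ≤ M = 2m*`.
Integrating this pointwise bound over `ȳ` gives the estimate.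
-/

open MeasureTheory Finset

lemma abs_mul_sub_mul_le (x y a b : ℝ) : |x * a - y * b| ≤ |x - y| * |a| + |y| * |a - b| := by
  calc |x * a - y * b| = |(x - y) * a + y * (a - b)| := by ring_nf
    _ ≤ |x - y| * |a| + |y| * |a - b| := (abs_add_le _ _).trans_eq (by rw [abs_mul, abs_mul])

lemma Finset.abs_prod_le_pow_card {ι : Type*} (s : Finset ι) {a : ι → ℝ} {M : ℝ}
    (ha : ∀ i ∈ s, |a i| ≤ M) : |∏ i ∈ s, a i| ≤ M ^ #s := by
  rw [abs_prod, ← prod_const]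
  exact prod_le_prod (fun i _ => abs_nonneg (a i)) ha

lemma Finset.abs_prod_sub_prod_le {ι : Type*} (s : Finset ι) {a b : ι → ℝ} {M : ℝ}
    (ha : ∀ i ∈ s, |a i| ≤ M) (hb : ∀ i ∈ s, |b i| ≤ M) :
    |∏ i ∈ s, a i - ∏ i ∈ s, b i| ≤ (∑ i ∈ s, |a i - b i|) * M ^ (#s - 1) := by
  classical
  induction s using Finset.induction_on with
  | empty => simp
  | insert j s hj ih =>
    rw [forall_mem_insert] at ha hb
    rcases s.eq_empty_or_nonempty with rfl | hs
    · simp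
    have hpow : M * M ^ (#s - 1) = M ^ #s := by rw [← pow_succ', Nat.sub_add_cancel hs.card_pos]
    rw [prod_insert hj, prod_insert hj, sum_insert hj, card_insert_of_notMem hj, Nat.add_sub_cancel]
    calc _ ≤ |a j - b j| * |∏ i ∈ s, a i| + |b j| * |∏ i ∈ s, a i - ∏ i ∈ s, b i| :=
          abs_mul_sub_mul_le _ _ _ _
      _ ≤ |a j - b j| * M ^ #s + M * ((∑ i ∈ s, |a i - b i|) * M ^ (#s - 1)) := by
          gcongr
          · exact s.abs_prod_le_pow_card ha.2
          · exact (abs_nonneg _).trans ha.1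
          · exact hb.1
          · exact ih ha.2 hb.2
      _ = (|a j - b j| + ∑ i ∈ s, |a i - b i|) * M ^ #s := by rw [← hpow]; ring

section DualDist

variable {P : Type*} [MeasurableSpace P]

/-- The total variation norm of `μ - ν`, in its dual form. -/
noncomputable def dualDist (μ ν : Measure P) : ℝ :=
  ⨆ g : {g : P → ℝ // Measurable g ∧ ∀ p, |g p| ≤ 1},
    |(∫ p, (g : P → ℝ) p ∂μ) - ∫ p, (g : P → ℝ) p ∂ν|

variable (μ ν : Measure P) [IsFiniteMeasure μ] [IsFiniteMeasure ν]

lemma abs_integral_le_mul_measureReal_univ {f : P → ℝ} {c : ℝ} (hf : ∀ p, |f p| ≤ c) :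
    |∫ p, f p ∂μ| ≤ c * μ.real Set.univ :=
  norm_integral_le_of_norm_le_const (f := f) (ae_of_all μ hf)

lemma bddAbove_range_abs_integral_sub :
    BddAbove (Set.range fun g : {g : P → ℝ // Measurable g ∧ ∀ p, |g p| ≤ 1} =>
      |(∫ p, (g : P → ℝ) p ∂μ) - ∫ p, (g : P → ℝ) p ∂ν|) := by
  refine ⟨1 * μ.real Set.univ + 1 * ν.real Set.univ, ?_⟩
  rintro _ ⟨g, rfl⟩
  exact (abs_sub _ _).trans (add_le_add
    (abs_integral_le_mul_measureReal_univ μ g.2.2) (abs_integral_le_mul_measureReal_univ ν g.2.2))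

lemma abs_integral_sub_le_dualDist {g : P → ℝ} (hg : Measurable g) (hg_le : ∀ p, |g p| ≤ 1) :
    |(∫ p, g p ∂μ) - ∫ p, g p ∂ν| ≤ dualDist μ ν :=
  le_ciSup (bddAbove_range_abs_integral_sub μ ν) ⟨g, hg, hg_le⟩

lemma abs_integral_sub_le_mul_dualDist {f : P → ℝ} {c : ℝ} (hf : Measurable f)
    (hf_le : ∀ p, |f p| ≤ c) : |(∫ p, f p ∂μ) - ∫ p, f p ∂ν| ≤ c * dualDist μ ν := by
  rcases lt_trichotomy c 0 with hc | rfl | hc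
  · have : IsEmpty P := ⟨fun p => (hc.trans_le (abs_nonneg _)).not_ge (hf_le p)⟩
    simp [dualDist, Measure.eq_zero_of_isEmpty μ, Measure.eq_zero_of_isEmpty ν]
  · simp [fun p => abs_nonpos_iff.1 (hf_le p)]
  · have := abs_integral_sub_le_dualDist μ ν (hf.div_const c) fun p => by
      rw [abs_div, abs_of_pos hc, div_le_one hc]; exact hf_le p
    rwa [integral_div, integral_div, ← sub_div, abs_div, abs_of_pos hc, div_le_iff₀' hc] at this


lemma abs_mul_prod_integral_sub_le {ι : Type*} [Fintype ι] [Nonempty ι]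
    {h : ℝ → ℝ} {L H C m : ℝ}
    (hh_nonneg : ∀ a, 0 ≤ a → 0 ≤ h a) (hh_lip : ∀ a b, |h a - h b| ≤ L * |a - b|)
    (hh_le : ∀ a, 0 ≤ a → h a ≤ H)
    {Ψ : P → ℝ} (hΨ_meas : Measurable Ψ) (hΨ_nonneg : ∀ p, 0 ≤ Ψ p) (hΨ_bdd : ∀ p, Ψ p ≤ C)
    {ψ : ι → P → ℝ} (hψ_meas : ∀ i, Measurable (ψ i))
    (hψ_nonneg : ∀ i p, 0 ≤ ψ i p) (hψ_bdd : ∀ i p, ψ i p ≤ 1)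
    (hμ : μ.real Set.univ ≤ m) (hν : ν.real Set.univ ≤ m) :
    |h (∫ p, Ψ p ∂μ) * ∏ i, ∫ p, ψ i p ∂μ - h (∫ p, Ψ p ∂ν) * ∏ i, ∫ p, ψ i p ∂ν| ≤
      (L * C * (2 * m) + H * Fintype.card ι) * (2 * m) ^ (Fintype.card ι - 1) * dualDist μ ν := by
  set D := dualDist μ ν
  set k := Fintype.card ι
  have hL : 0 ≤ L := by simpa using (abs_nonneg _).trans (hh_lip 1 0)
  have hm : 0 ≤ m := measureReal_nonneg.trans hμ
  have hψ_abs : ∀ i p, |ψ i p| ≤ 1 := fun i p => abs_le.2 ⟨by linarith [hψ_nonneg i p], hψ_bdd i p⟩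
  have hψ_int : ∀ (ρ : Measure P) [IsFiniteMeasure ρ], ρ.real Set.univ ≤ m →
      ∀ i ∈ univ, |∫ p, ψ i p ∂ρ| ≤ 2 * m := fun ρ _ hρ i _ => by
    linarith [abs_integral_le_mul_measureReal_univ ρ (hψ_abs i)]
  have hΨ_diff : |(∫ p, Ψ p ∂μ) - ∫ p, Ψ p ∂ν| ≤ C * D :=
    abs_integral_sub_le_mul_dualDist μ ν hΨ_meas fun p =>
      (abs_of_nonneg (hΨ_nonneg p)).trans_le (hΨ_bdd p)
  have hprod_diff : |∏ i, ∫ p, ψ i p ∂μ - ∏ i, ∫ p, ψ i p ∂ν| ≤ k * D * (2 * m) ^ (k - 1) :=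
    calc _ ≤ (∑ i, |(∫ p, ψ i p ∂μ) - ∫ p, ψ i p ∂ν|) * (2 * m) ^ (k - 1) :=
          univ.abs_prod_sub_prod_le (hψ_int μ hμ) (hψ_int ν hν)
      _ ≤ (∑ _i : ι, D) * (2 * m) ^ (k - 1) := by
          gcongr with i
          exact abs_integral_sub_le_dualDist μ ν (hψ_meas i) (hψ_abs i)
      _ = k * D * (2 * m) ^ (k - 1) := by simp [k]
  have hΨ_int_nonneg : 0 ≤ ∫ p, Ψ p ∂ν := integral_nonneg hΨ_nonneg
  have hh_abs : |h (∫ p, Ψ p ∂ν)| ≤ H := by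
    rw [abs_of_nonneg (hh_nonneg _ hΨ_int_nonneg)]; exact hh_le _ hΨ_int_nonneg
  have hh_diff : |h (∫ p, Ψ p ∂μ) - h (∫ p, Ψ p ∂ν)| ≤ L * (C * D) :=
    (hh_lip _ _).trans (by gcongr)
  have hCD : 0 ≤ C * D := (abs_nonneg _).trans hΨ_diff
  have hH : 0 ≤ H := (abs_nonneg _).trans hh_abs
  calc _ ≤ |h (∫ p, Ψ p ∂μ) - h (∫ p, Ψ p ∂ν)| * |∏ i, ∫ p, ψ i p ∂μ| +
        |h (∫ p, Ψ p ∂ν)| * |∏ i, ∫ p, ψ i p ∂μ - ∏ i, ∫ p, ψ i p ∂ν| := abs_mul_sub_mul_le _ _ _ _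
    _ ≤ L * (C * D) * (2 * m) ^ k + H * (k * D * (2 * m) ^ (k - 1)) := by
        gcongr
        exact univ.abs_prod_le_pow_card (hψ_int μ hμ)
    _ = _ := by rw [← pow_sub_one_mul Fintype.card_ne_zero]; ring

end DualDist

theorem reaction_rate_lipschitz_estimate_general
    {E P : Type*} [MeasurableSpace E] [MeasurableSpace P]
    (ϱ : Measure E) [IsFiniteMeasure ϱ]
    (k : ℕ) (hk : 1 ≤ k)
    (h : E → ℝ → ℝ) (L S CΨ mstar : ℝ)
    (hh_nonneg : ∀ y a, 0 ≤ a → 0 ≤ h y a)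
    (hh_lip : ∀ y : E, ∀ a b : ℝ, |h y a - h y b| ≤ L * |a - b|)
    (hbddabove : ∀ y : E, BddAbove (h y '' Set.Ici 0))
    (hSint : Integrable (fun y : E => sSup (h y '' Set.Ici 0)) ϱ)
    (hS : S = ∫ y, sSup (h y '' Set.Ici 0) ∂ϱ)
    (Ψ : E → P → ℝ)
    (hΨ_meas : ∀ y, Measurable (Ψ y))
    (hΨ_nonneg : ∀ y p, 0 ≤ Ψ y p) (hΨ_bdd : ∀ y p, Ψ y p ≤ CΨ)
    (ψ : Fin k → E → P → ℝ)
    (hψ_meas : ∀ i y, Measurable (ψ i y))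
    (hψ_nonneg : ∀ i y p, 0 ≤ ψ i y p) (hψ_bdd : ∀ i y p, ψ i y p ≤ 1)
    (m' m'' : Measure P) [IsFiniteMeasure m'] [IsFiniteMeasure m'']
    (hm' : (m' Set.univ).toReal ≤ mstar) (hm'' : (m'' Set.univ).toReal ≤ mstar) :
    |∫ y, (h y (∫ p, Ψ y p ∂m') * ∏ i, ∫ p, ψ i y p ∂m' -
          h y (∫ p, Ψ y p ∂m'') * ∏ i, ∫ p, ψ i y p ∂m'') ∂ϱ| ≤
      (L * CΨ * (ϱ Set.univ).toReal * (2 * mstar) + S * k) * (2 * mstar) ^ (k - 1) *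
        ⨆ g : {g : P → ℝ // Measurable g ∧ ∀ p, |g p| ≤ 1},
          |(∫ p, (g : P → ℝ) p ∂m') - ∫ p, (g : P → ℝ) p ∂m''| := by
  have : Nonempty (Fin k) := ⟨⟨0, hk⟩⟩
  set bound : E → ℝ := fun y =>
    (L * CΨ * (2 * mstar) + sSup (h y '' Set.Ici 0) * k) * (2 * mstar) ^ (k - 1) * dualDist m' m''
  have hpointwise : ∀ y, |h y (∫ p, Ψ y p ∂m') * ∏ i, ∫ p, ψ i y p ∂m' -
      h y (∫ p, Ψ y p ∂m'') * ∏ i, ∫ p, ψ i y p ∂m''| ≤ bound y := fun y => by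
    simpa using abs_mul_prod_integral_sub_le m' m'' (hh_nonneg y) (hh_lip y)
      (fun a ha => le_csSup (hbddabove y) ⟨a, ha, rfl⟩) (hΨ_meas y) (hΨ_nonneg y) (hΨ_bdd y)
      (fun i => hψ_meas i y) (fun i => hψ_nonneg i y) (fun i => hψ_bdd i y) hm' hm''
  have hbound_int : Integrable bound ϱ :=
    (((integrable_const _).add (hSint.mul_const _)).mul_const _).mul_const _
  refine (norm_integral_le_of_norm_le hbound_int
    (ae_of_all ϱ fun y => (Real.norm_eq_abs _).trans_le (hpointwise y))).trans_eq ?_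
  simp only [bound, integral_mul_const, integral_add (integrable_const _) (hSint.mul_const _),
    integral_const, smul_eq_mul, measureReal_def, ← hS, dualDist]
  ring

/-- Key Lipschitz estimate combining reaction factor and sampling: if `h(ybar,·)` is
`L`-Lipschitz, `S = ∫_E sup_{a≥0} h(ybar,a) ϱ(dybar) < ∞`, `0 ≤ Ψ ≤ ‖Ψ‖_∞`,
`0 ≤ ψ_i ≤ 1`, and `m', m''` have total masses at most `m*`, then
`|∫ ϱ(dybar)[h(ybar,⟨m',Ψ⟩)∏⟨m',ψ_i⟩ − h(ybar,⟨m'',Ψ⟩)∏⟨m'',ψ_i⟩]|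
 ≤ [L‖Ψ‖_∞ϱ(E)(2m*) + Sk](2m*)^{k−1} sup_{‖ψ‖_∞≤1}|⟨m'−m'',ψ⟩|`. -/
theorem reaction_rate_lipschitz_estimate
    {E P : Type*} [MetricSpace E] [CompactSpace E] [MeasurableSpace E] [BorelSpace E]
    [MetricSpace P] [CompactSpace P] [MeasurableSpace P] [BorelSpace P]
    (ϱ : Measure E) [IsFiniteMeasure ϱ]
    (k : ℕ) (hk : 1 ≤ k)
    (h : E → ℝ → ℝ) (L S CΨ mstar : ℝ)
    (hh_nonneg : ∀ y a, 0 ≤ a → 0 ≤ h y a)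
    (hh_lip : ∀ y : E, ∀ a b : ℝ, |h y a - h y b| ≤ L * |a - b|)
    (hbddabove : ∀ y : E, BddAbove (h y '' Set.Ici 0))
    (hSint : Integrable (fun y : E => sSup (h y '' Set.Ici 0)) ϱ)
    (hS : S = ∫ y, sSup (h y '' Set.Ici 0) ∂ϱ)
    (Ψ : E → P → ℝ)
    (hΨ_meas : ∀ y, Measurable (Ψ y))
    (hΨ_nonneg : ∀ y p, 0 ≤ Ψ y p) (hΨ_bdd : ∀ y p, Ψ y p ≤ CΨ)
    (ψ : Fin k → E → P → ℝ)
    (hψ_meas : ∀ i y, Measurable (ψ i y))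
    (hψ_nonneg : ∀ i y p, 0 ≤ ψ i y p) (hψ_bdd : ∀ i y p, ψ i y p ≤ 1)
    (m' m'' : Measure P) [IsFiniteMeasure m'] [IsFiniteMeasure m'']
    (hm' : (m' Set.univ).toReal ≤ mstar) (hm'' : (m'' Set.univ).toReal ≤ mstar) :
    |∫ y, (h y (∫ p, Ψ y p ∂m') * ∏ i, ∫ p, ψ i y p ∂m' -
          h y (∫ p, Ψ y p ∂m'') * ∏ i, ∫ p, ψ i y p ∂m'') ∂ϱ| ≤
      (L * CΨ * (ϱ Set.univ).toReal * (2 * mstar) + S * k) * (2 * mstar) ^ (k - 1) *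
        ⨆ g : {g : P → ℝ // Measurable g ∧ ∀ p, |g p| ≤ 1},
          |(∫ p, (g : P → ℝ) p ∂m') - ∫ p, (g : P → ℝ) p ∂m''| :=
  reaction_rate_lipschitz_estimate_general ϱ k hk h L S CΨ mstar hh_nonneg hh_lip hbddabove hSint hS
    Ψ hΨ_meas hΨ_nonneg hΨ_bdd ψ hψ_meas hψ_nonneg hψ_bdd m' m'' hm' hm''
end
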